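/- Let 0<q<1 and define F(n,k) = (1+q^k) ([n choose k]_q/[n+k choose k]_q) (-1)^{k-1} q^{k(k-1)/2} and G(n,k) = ((q^{n+k}-1)/(q^k+1)) F(n,k). Then for all positive integers n,k, (1-q^n) F(n,k) = G(n,k+1) - G(n,k). -/

import Mathlib

open Finset

/-- q-analogue of a natural number: [m]_q = (1-q^m)/(1-q). -/
noncomputable def qnum (q : ℝ) (m : ℕ) : ℝ := (1 - q ^ m) / (1 - q)

/-- q-Pochhammer (q;q)_n = ∏_{k=0}^{n-1} (1 - q^{k+1}). -/
noncomputable def qPoch (q : ℝ) (n : ℕ) : ℝ := ∏ k ∈ Finset.range n, (1 - q ^ (k + 1))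

/-- Gaussian q-binomial coefficient, 0 when m > n. -/
noncomputable def qbinom (q : ℝ) (n m : ℕ) : ℝ :=
  if m ≤ n then qPoch q n / (qPoch q m * qPoch q (n - m)) else 0

/-- q-multiple harmonic star sum H_n^*[s₁,…,s_m]. -/
noncomputable def qHstar (q : ℝ) : List ℕ → ℕ → ℝ
  | [], _ => 1
  | s :: rest, n => ∑ k ∈ Finset.Icc 1 n, q ^ k / qnum q k ^ s * qHstar q rest k

/-- q-multiple zeta star value ζ_q^*[s₁,…,s_m]. -/
noncomputable def qZetaStar (q : ℝ) : List ℕ → ℝ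
  | [] => 1
  | s :: rest => ∑' k : ℕ, q ^ (k + 1) / qnum q (k + 1) ^ s * qHstar q rest (k + 1)

/-- strict multiple harmonic sum ∑_{n ≥ k₁ > … > k_r ≥ 1} ∏ 1/k_j^{p_j}. -/
noncomputable def Hstrict : List ℕ → ℕ → ℝ
  | [], _ => 1
  | p :: rest, n => ∑ k ∈ Finset.Icc 1 n, (1 : ℝ) / (k : ℝ) ^ p * Hstrict rest (k - 1)

/-- binomial-weighted strict multiple harmonic sum Ĥ_n(p). -/
noncomputable def Hhat : List ℕ → ℕ → ℝ
  | [], _ => 1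
  | p :: rest, n => ∑ k ∈ Finset.Icc 1 n,
      ((n.choose k : ℝ) / ((n + k).choose n)) * ((1 : ℝ) / (k : ℝ) ^ p) * Hstrict rest (k - 1)

/-- ordinary multiple harmonic star sum H_n^*(s₁,…,s_m). -/
noncomputable def HstarO : List ℕ → ℕ → ℝ
  | [], _ => 1
  | s :: rest, n => ∑ k ∈ Finset.Icc 1 n, (1 : ℝ) / (k : ℝ) ^ s * HstarO rest k

/-- ordinary multiple zeta star value. -/
noncomputable def zetaStarO : List ℕ → ℝ
  | [] => 1
  | s :: rest => ∑' k : ℕ, (1 : ℝ) / ((k : ℝ) + 1) ^ s * HstarO rest (k + 1)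

/-- Merge a list of parts according to a comma(true)/plus(false) pattern. -/
def mergeComp : ℕ → List ℕ → List Bool → List ℕ
  | a, [], _ => [a]
  | a, _ :: _, [] => [a]
  | a, b :: t, true :: bs => a :: mergeComp b t bs
  | a, b :: t, false :: bs => mergeComp (a + b) t bs

/-!
Write `r k = [n, k]_q / [n + k, k]_q` and `s k = (-1)^(k-1) q^(k(k-1)/2)`, so that
`F n k = (1 + q^k) r k s k` and `G n k = -(1 - q^(n+k)) r k s k`. Shifting `k` multiplies `r` by
`(1 - q^(n-k)) / (1 - q^(n+k+1))` and `s` by `-q^k`, hence `G n (k+1) = (q^k - q^n) r k s k`,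
and `G n (k+1) - G n k = (q^k - q^n + 1 - q^(n+k)) r k s k = (1 - q^n) F n k`.
-/

section QBinom

variable {q : ℝ}

lemma qPoch_succ (n : ℕ) : qPoch q (n + 1) = qPoch q n * (1 - q ^ (n + 1)) :=
  Finset.prod_range_succ _ _

lemma qbinom_eq_zero_of_lt {n k : ℕ} (h : n < k) : qbinom q n k = 0 :=
  if_neg (Nat.not_le.mpr h)

lemma qbinom_succ_succ_mul (hq : ∀ m, q ^ (m + 1) ≠ 1) (m k : ℕ) :
    qbinom q (m + 1) (k + 1) * (1 - q ^ (k + 1)) = qbinom q m k * (1 - q ^ (m + 1)) := by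
  rcases Nat.lt_or_ge m k with hmk | hkm
  · rw [qbinom_eq_zero_of_lt hmk, qbinom_eq_zero_of_lt (by omega)]
    ring
  have hk : 1 - q ^ (k + 1) ≠ 0 := sub_ne_zero.mpr (hq k).symm
  rw [qbinom, qbinom, if_pos (by omega), if_pos hkm, Nat.add_sub_add_right, qPoch_succ m,
    qPoch_succ k]
  field_simp

/-- Multiplying by `q ^ k` avoids the truncated exponent in `1 - q ^ (n - k)` and keeps the
identity true for `k ≥ n`. -/
lemma qbinom_succ_right_mul (hq : ∀ m, q ^ (m + 1) ≠ 1) (n k : ℕ) :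
    qbinom q n (k + 1) * (1 - q ^ (k + 1)) * q ^ k = qbinom q n k * (q ^ k - q ^ n) := by
  rcases Nat.lt_or_ge k n with hkn | hnk
  · obtain ⟨d, rfl⟩ := Nat.exists_eq_add_of_lt hkn
    rw [qbinom, qbinom, if_pos (by omega), if_pos (by omega),
      show k + d + 1 - k = d + 1 by omega, show k + d + 1 - (k + 1) = d by omega,
      qPoch_succ k, qPoch_succ d, show q ^ (k + d + 1) = q ^ k * q ^ (d + 1) by ring]
    have hk : 1 - q ^ (k + 1) ≠ 0 := sub_ne_zero.mpr (hq k).symm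
    have hd : 1 - q ^ (d + 1) ≠ 0 := sub_ne_zero.mpr (hq d).symm
    field_simp
  · rw [qbinom_eq_zero_of_lt (by omega)]
    rcases hnk.eq_or_lt with rfl | hnk
    · ring
    · rw [qbinom_eq_zero_of_lt hnk]
      ring

lemma qbinom_div_qbinom_add_succ_mul (hq : ∀ m, q ^ (m + 1) ≠ 1) (n k : ℕ) :
    qbinom q n (k + 1) / qbinom q (n + (k + 1)) (k + 1) * (1 - q ^ (n + k + 1)) * q ^ k =
      qbinom q n k / qbinom q (n + k) k * (q ^ k - q ^ n) := by
  have hk : 1 - q ^ (k + 1) ≠ 0 := sub_ne_zero.mpr (hq k).symm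
  have hnum := qbinom_succ_right_mul hq n k
  have hden := qbinom_succ_succ_mul hq (n + k) k
  have hc : 1 - q ^ (n + k + 1) ≠ 0 := sub_ne_zero.mpr (hq (n + k)).symm
  rw [← add_assoc, eq_div_of_mul_eq hk hden, div_mul_eq_mul_div _ _ (q ^ k - q ^ n), ← hnum]
  field_simp

end QBinom

lemma neg_one_pow_mul_pow_triangle_succ (q : ℝ) {k : ℕ} (hk : 1 ≤ k) :
    (-1 : ℝ) ^ k * q ^ ((k + 1) * k / 2) =
      -(q ^ k * ((-1 : ℝ) ^ (k - 1) * q ^ (k * (k - 1) / 2))) := by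
  obtain ⟨j, rfl⟩ := Nat.exists_eq_add_of_le' hk
  rw [show (j + 1 + 1) * (j + 1) / 2 = (j + 1) * (j + 1 - 1) / 2 + (j + 1) from
    Nat.triangle_succ (j + 1), pow_add, Nat.add_sub_cancel, pow_succ]
  ring

theorem stmt4_general (q : ℝ) (hq0 : 0 < q) (hq1 : q < 1)
    (F G : ℕ → ℕ → ℝ)
    (hF : ∀ n k, F n k = (1 + q ^ k) * (qbinom q n k / qbinom q (n + k) k) *
      (-1 : ℝ) ^ (k - 1) * q ^ (k * (k - 1) / 2))
    (hG : ∀ n k, G n k = ((q ^ (n + k) - 1) / (q ^ k + 1)) * F n k)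
    (n k : ℕ) (hk : 1 ≤ k) :
    (1 - q ^ n) * F n k = G n (k + 1) - G n k := by
  have hq : ∀ m, q ^ (m + 1) ≠ 1 := fun m => (pow_lt_one₀ hq0.le hq1 m.succ_ne_zero).ne
  have hratio := qbinom_div_qbinom_add_succ_mul hq n k
  set r := qbinom q n k / qbinom q (n + k) k
  set r' := qbinom q n (k + 1) / qbinom q (n + (k + 1)) (k + 1)
  set s := (-1 : ℝ) ^ (k - 1) * q ^ (k * (k - 1) / 2)
  have hFk : F n k = (1 + q ^ k) * r * s := by rw [hF]; ring
  have hFk1 : F n (k + 1) = -((1 + q ^ (k + 1)) * r' * q ^ k * s) := by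
    rw [hF, Nat.add_sub_cancel, mul_assoc _ ((-1 : ℝ) ^ k),
      neg_one_pow_mul_pow_triangle_succ q hk]
    ring
  have hk1 : q ^ k + 1 ≠ 0 := by positivity
  have hk2 : q ^ (k + 1) + 1 ≠ 0 := by positivity
  have hGk : G n k = (q ^ (n + k) - 1) * r * s := by
    rw [hG, hFk, add_comm 1]
    field_simp
  have hGk1 : G n (k + 1) = r' * (1 - q ^ (n + k + 1)) * q ^ k * s := by
    rw [hG, hFk1, add_comm 1]
    field_simp
    ring
  rw [hFk, hGk, hGk1]
  linear_combination -s * hratio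

theorem stmt4 (q : ℝ) (hq0 : 0 < q) (hq1 : q < 1)
    (F G : ℕ → ℕ → ℝ)
    (hF : ∀ n k, F n k = (1 + q ^ k) * (qbinom q n k / qbinom q (n + k) k) *
      (-1 : ℝ) ^ (k - 1) * q ^ (k * (k - 1) / 2))
    (hG : ∀ n k, G n k = ((q ^ (n + k) - 1) / (q ^ k + 1)) * F n k)
    (n k : ℕ) (hn : 1 ≤ n) (hk : 1 ≤ k) :
    (1 - q ^ n) * F n k = G n (k + 1) - G n k :=
  stmt4_general q hq0 hq1 F G hF hG n k hk
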